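/- Let r, d1, d2 be positive integers with gcd(d1, r) = gcd(d2, r) = 1, and let m1, m2 be integers. Then Σ_{χ mod r} χ(d1²) · conj(χ)(d2²) · G_χ(1) · G_χ(m1²) · G_{conj(χ)}(1) · G_{conj(χ)}(m2²) = φ(r) · Σ_{u mod r, gcd(u,r)=1} R(u + m1²d2², r) · R(u + m2²d1², r), where the first sum runs over all Dirichlet characters χ modulo r. -/

import Mathlib

/-- `e(x/q)`-type additive character: for `x : ZMod q`, `eZMod q x = exp(2πi·x/q)`. -/
noncomputable def eZMod (q : ℕ) (x : ZMod q) : ℂ :=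
  Complex.exp (2 * Real.pi * Complex.I * (x.val : ℂ) / (q : ℂ))

/-- Kloosterman sum `S(m, n; q) = Σ_{d mod q, gcd(d,q)=1} e((m·d + n·d⁻¹)/q)`. -/
noncomputable def kloostermanS (q : ℕ) (m n : ZMod q) : ℂ :=
  ∑ d ∈ (Finset.range q).filter (fun d => Nat.gcd d q = 1),
    eZMod q (m * (d : ZMod q) + n * ((d : ZMod q)⁻¹))

/-- Gauss sum `G_χ(n) = Σ_{a mod q} χ(a) e(a·n/q)`. -/
noncomputable def gaussS (q : ℕ) (χ : DirichletCharacter ℂ q) (n : ZMod q) : ℂ :=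
  ∑ a ∈ Finset.range q, χ (a : ZMod q) * eZMod q ((a : ZMod q) * n)

/-- Ramanujan sum `R(n, q) = Σ_{a mod q, gcd(a,q)=1} e(a·n/q)`. -/
noncomputable def ramanujanS (q : ℕ) (n : ZMod q) : ℂ :=
  ∑ a ∈ (Finset.range q).filter (fun a => Nat.gcd a q = 1), eZMod q ((a : ZMod q) * n)

/-! Pairing the Gauss sums gives `G_χ(n) G_χ(m) = Σ_x χ(x) S(m, n x; r)`, so the summand is
`χ(d1²) χ̄(d2²)` times a character transform of `S(m1², ·)` times the conjugate transform of
`S(m2², ·)`. Orthogonality of characters collapses the sum over `χ` to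
`φ(r) Σ_z S(m1², d2² z) S(m2², d1² z)`. Substituting `z = s t u` and `s d2²`, `t d1²` for the
summation variables of the two Kloosterman sums turns this into the expansion
`φ(r) Σ_u Σ_s Σ_t e(s (u + m1² d2²) / r) e(t (u + m2² d1²) / r)` of the right-hand side. -/

open Finset

lemma conj_apply_coe_unit {q : ℕ} (χ : DirichletCharacter ℂ q) (u : (ZMod q)ˣ) :
    starRingEnd ℂ (χ u) = χ ↑u⁻¹ := by
  rw [← RCLike.star_def, MulChar.star_apply', MulChar.inv_apply, Ring.inverse_unit]

section
variable {q : ℕ} [NeZero q]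

lemma eZMod_eq_stdAddChar (x : ZMod q) : eZMod q x = ZMod.stdAddChar x := by
  rw [ZMod.stdAddChar_apply, ZMod.toCircle_apply, eZMod]

lemma eZMod_add (x y : ZMod q) : eZMod q (x + y) = eZMod q x * eZMod q y := by
  simp only [eZMod_eq_stdAddChar, AddChar.map_add_eq_mul]

lemma sum_filter_coprime_eq_sum_units (f : ZMod q → ℂ) :
    ∑ i ∈ (range q).filter (fun i => Nat.gcd i q = 1), f i = ∑ u : (ZMod q)ˣ, f u := by
  refine sum_bij (fun i hi => ZMod.unitOfCoprime i (mem_filter.mp hi).2) (by simp)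
    (fun i hi j hj hij => ?_) (fun u _ => ?_) (fun i hi => by rw [ZMod.coe_unitOfCoprime])
  · have := congrArg (fun u : (ZMod q)ˣ => (u : ZMod q).val) hij
    simp only [ZMod.coe_unitOfCoprime] at this
    rwa [ZMod.val_cast_of_lt (mem_range.mp (mem_filter.mp hi).1),
      ZMod.val_cast_of_lt (mem_range.mp (mem_filter.mp hj).1)] at this
  · refine ⟨(u : ZMod q).val, mem_filter.mpr ⟨mem_range.mpr (ZMod.val_lt _),
      ZMod.val_coe_unit_coprime u⟩, Units.ext ?_⟩
    rw [ZMod.coe_unitOfCoprime, ZMod.natCast_zmod_val]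

lemma ramanujanS_eq_sum_units (n : ZMod q) :
    ramanujanS q n = ∑ u : (ZMod q)ˣ, eZMod q (u * n) :=
  sum_filter_coprime_eq_sum_units (fun a => eZMod q (a * n))

lemma kloostermanS_eq_sum_units (m n : ZMod q) :
    kloostermanS q m n = ∑ u : (ZMod q)ˣ, eZMod q (m * u + n * ↑u⁻¹) := by
  simp only [kloostermanS, sum_filter_coprime_eq_sum_units (fun d => eZMod q (m * d + n * d⁻¹)),
    ZMod.inv_coe_unit]

lemma gaussS_eq_sum_units (χ : DirichletCharacter ℂ q) (n : ZMod q) :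
    gaussS q χ n = ∑ u : (ZMod q)ˣ, χ u * eZMod q (u * n) := by
  rw [gaussS, ← sum_filter_of_ne (p := fun i => Nat.gcd i q = 1) fun i _ hi => ?_]
  · exact sum_filter_coprime_eq_sum_units (fun a => χ a * eZMod q (a * n))
  · exact (ZMod.isUnit_iff_coprime i q).mp
      (not_not.mp (mt χ.map_nonunit (left_ne_zero_of_mul hi)))

lemma sum_apply_mul_conj_apply (x y : (ZMod q)ˣ) :
    ∑ χ : DirichletCharacter ℂ q, χ x * starRingEnd ℂ (χ y) =
      if x = y then (q.totient : ℂ) else 0 := by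
  simp only [conj_apply_coe_unit, ← map_mul, ← Units.val_mul, DirichletCharacter.sum_characters_eq,
    Units.val_eq_one, mul_inv_eq_one]

lemma gaussS_mul_gaussS (χ : DirichletCharacter ℂ q) (n m : ZMod q) :
    gaussS q χ n * gaussS q χ m = ∑ x : (ZMod q)ˣ, χ x * kloostermanS q m (n * x) := by
  calc gaussS q χ n * gaussS q χ m
      = ∑ b : (ZMod q)ˣ, ∑ a : (ZMod q)ˣ, χ ↑(a * b) * eZMod q (m * b + n * a) := by
        rw [gaussS_eq_sum_units, gaussS_eq_sum_units, sum_mul_sum, sum_comm]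
        simp only [Units.val_mul, map_mul, eZMod_add]
        refine sum_congr rfl fun _ _ => sum_congr rfl fun _ _ => by ring_nf
    _ = ∑ b : (ZMod q)ˣ, ∑ x : (ZMod q)ˣ, χ x * eZMod q (m * b + n * x * ↑b⁻¹) := by
        refine sum_congr rfl fun b _ => (Equiv.sum_comp (Equiv.mulRight b⁻¹) _).symm.trans ?_
        simp [mul_assoc]
    _ = ∑ x : (ZMod q)ˣ, χ x * kloostermanS q m (n * x) := by
        simp only [kloostermanS_eq_sum_units, mul_sum]
        exact sum_comm

lemma sum_twisted_transform_mul_conj_transform (α β : (ZMod q)ˣ) (f g : (ZMod q)ˣ → ℂ) :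
    ∑ χ : DirichletCharacter ℂ q, χ α * starRingEnd ℂ (χ β) *
        (∑ x : (ZMod q)ˣ, χ x * f x) * (∑ y : (ZMod q)ˣ, starRingEnd ℂ (χ y) * g y) =
      q.totient * ∑ z, f (β * z) * g (α * z) := by
  calc _ = ∑ x : (ZMod q)ˣ, ∑ y : (ZMod q)ˣ,
          (∑ χ : DirichletCharacter ℂ q, χ ↑(α * x) * starRingEnd ℂ (χ ↑(β * y))) *
            (f x * g y) := by
        simp only [mul_assoc, sum_mul_sum]
        simp only [mul_sum, sum_mul, Units.val_mul, map_mul]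
        rw [sum_comm]
        refine sum_congr rfl fun _ _ => ?_
        rw [sum_comm]
        refine sum_congr rfl fun _ _ => sum_congr rfl fun _ _ => by ring_nf
    _ = ∑ z, ∑ y, if α * z = y then q.totient * (f (β * z) * g y) else 0 := by
        rw [← Equiv.sum_comp (Equiv.mulLeft β)]
        refine sum_congr rfl fun z _ => sum_congr rfl fun y _ => ?_
        simp only [Equiv.coe_mulLeft, sum_apply_mul_conj_apply, mul_left_comm α β, mul_right_inj,
          ite_mul, zero_mul]
    _ = _ := by simp only [sum_ite_eq, mem_univ, if_true, mul_sum]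

lemma sum_kloostermanS_mul_kloostermanS (μ ν : (ZMod q)ˣ) (a b : ZMod q) :
    ∑ z : (ZMod q)ˣ, kloostermanS q a (μ * z) * kloostermanS q b (ν * z) =
      ∑ u : (ZMod q)ˣ, ramanujanS q (u + μ * a) * ramanujanS q (u + ν * b) := by
  calc _ = ∑ z : (ZMod q)ˣ, ∑ s : (ZMod q)ˣ, ∑ t : (ZMod q)ˣ,
          eZMod q (a * ↑(s * μ) + ↑(μ * z * (s * μ)⁻¹) +
            (b * ↑(t * ν) + ↑(ν * z * (t * ν)⁻¹))) := by
        refine sum_congr rfl fun z _ => ?_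
        rw [kloostermanS_eq_sum_units, kloostermanS_eq_sum_units, sum_mul_sum,
          ← Equiv.sum_comp (Equiv.mulRight μ)]
        refine sum_congr rfl fun s _ => ?_
        rw [← Equiv.sum_comp (Equiv.mulRight ν)]
        simp only [Equiv.coe_mulRight, eZMod_add, Units.val_mul]
    _ = ∑ s : (ZMod q)ˣ, ∑ t : (ZMod q)ˣ, ∑ z : (ZMod q)ˣ,
          eZMod q (a * ↑(s * μ) + ↑(μ * z * (s * μ)⁻¹) +
            (b * ↑(t * ν) + ↑(ν * z * (t * ν)⁻¹))) := by
        rw [sum_comm]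
        exact sum_congr rfl fun _ _ => sum_comm
    _ = ∑ s : (ZMod q)ˣ, ∑ t : (ZMod q)ˣ, ∑ u : (ZMod q)ˣ,
          eZMod q (s * (u + μ * a) + t * (u + ν * b)) := by
        refine sum_congr rfl fun s _ => sum_congr rfl fun t _ => ?_
        rw [← Equiv.sum_comp (Equiv.mulLeft (s * t))]
        refine sum_congr rfl fun u _ => congrArg (eZMod q) ?_
        have hs : μ * (s * t * u) * (s * μ)⁻¹ = t * u := by
          rw [mul_inv_eq_iff_eq_mul]; ac_rfl
        have ht : ν * (s * t * u) * (t * ν)⁻¹ = s * u := by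
          rw [mul_inv_eq_iff_eq_mul]; ac_rfl
        simp only [Equiv.coe_mulLeft, hs, ht, Units.val_mul]
        ring
    _ = _ := by
        simp only [ramanujanS_eq_sum_units, sum_mul_sum, ← eZMod_add]
        exact (sum_comm.trans (sum_congr rfl fun _ _ => sum_comm)).symm

end

theorem stmt8_general (r d1 d2 : ℕ) [NeZero r]
    (h1 : Nat.gcd d1 r = 1) (h2 : Nat.gcd d2 r = 1) (m1 m2 : ℤ) :
    ∑ χ : DirichletCharacter ℂ r,
        χ ((d1 ^ 2 : ℕ) : ZMod r) * (starRingEnd ℂ) (χ ((d2 ^ 2 : ℕ) : ZMod r)) *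
          gaussS r χ (1 : ZMod r) * gaussS r χ ((m1 ^ 2 : ℤ) : ZMod r) *
            gaussS r (χ.ringHomComp (starRingEnd ℂ)) (1 : ZMod r) *
              gaussS r (χ.ringHomComp (starRingEnd ℂ)) ((m2 ^ 2 : ℤ) : ZMod r) =
      (r.totient : ℂ) *
        ∑ u ∈ (Finset.range r).filter (fun u => Nat.gcd u r = 1),
          ramanujanS r (((u : ℕ) : ZMod r) + ((m1 ^ 2 * (d2 : ℤ) ^ 2 : ℤ) : ZMod r)) *
            ramanujanS r (((u : ℕ) : ZMod r) + ((m2 ^ 2 * (d1 : ℤ) ^ 2 : ℤ) : ZMod r)) := by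
  set e1 := ZMod.unitOfCoprime (d1 ^ 2) (Nat.Coprime.pow_left 2 h1)
  set e2 := ZMod.unitOfCoprime (d2 ^ 2) (Nat.Coprime.pow_left 2 h2)
  have he1 : ((d1 ^ 2 : ℕ) : ZMod r) = e1 := (ZMod.coe_unitOfCoprime _ _).symm
  have he2 : ((d2 ^ 2 : ℕ) : ZMod r) = e2 := (ZMod.coe_unitOfCoprime _ _).symm
  have hA : ((m1 ^ 2 * (d2 : ℤ) ^ 2 : ℤ) : ZMod r) = e2 * ((m1 ^ 2 : ℤ) : ZMod r) := by
    rw [← he2]; push_cast; ring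
  have hB : ((m2 ^ 2 * (d1 : ℤ) ^ 2 : ℤ) : ZMod r) = e1 * ((m2 ^ 2 : ℤ) : ZMod r) := by
    rw [← he1]; push_cast; ring
  simp only [he1, he2, mul_assoc _ (gaussS r _ 1), gaussS_mul_gaussS, one_mul,
    MulChar.ringHomComp_apply, sum_twisted_transform_mul_conj_transform, Units.val_mul]
  rw [sum_kloostermanS_mul_kloostermanS, hA, hB,
    sum_filter_coprime_eq_sum_units (fun x => ramanujanS r (x + _) * ramanujanS r (x + _))]

/-- For positive `r, d1, d2` with `(d1, r) = (d2, r) = 1` and integers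
`m1, m2`: `Σ_{χ mod r} χ(d1²) conj(χ)(d2²) G_χ(1) G_χ(m1²) G_{conj(χ)}(1) G_{conj(χ)}(m2²)
  = φ(r) Σ_{u mod r, (u,r)=1} R(u + m1²d2², r) R(u + m2²d1², r)`. -/
theorem stmt8 (r d1 d2 : ℕ) (hr : 0 < r) [NeZero r] (hd1 : 0 < d1) (hd2 : 0 < d2)
    (h1 : Nat.gcd d1 r = 1) (h2 : Nat.gcd d2 r = 1) (m1 m2 : ℤ) :
    ∑ χ : DirichletCharacter ℂ r,
        χ ((d1 ^ 2 : ℕ) : ZMod r) * (starRingEnd ℂ) (χ ((d2 ^ 2 : ℕ) : ZMod r)) *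
          gaussS r χ (1 : ZMod r) * gaussS r χ ((m1 ^ 2 : ℤ) : ZMod r) *
            gaussS r (χ.ringHomComp (starRingEnd ℂ)) (1 : ZMod r) *
              gaussS r (χ.ringHomComp (starRingEnd ℂ)) ((m2 ^ 2 : ℤ) : ZMod r) =
      (r.totient : ℂ) *
        ∑ u ∈ (Finset.range r).filter (fun u => Nat.gcd u r = 1),
          ramanujanS r (((u : ℕ) : ZMod r) + ((m1 ^ 2 * (d2 : ℤ) ^ 2 : ℤ) : ZMod r)) *
            ramanujanS r (((u : ℕ) : ZMod r) + ((m2 ^ 2 * (d1 : ℤ) ^ 2 : ℤ) : ZMod r)) :=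
  stmt8_general r d1 d2 h1 h2 m1 m2
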